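/- Let μ be a probability measure on Ω, let Xᵢ, Xⱼ be Boolean sensitivity indicators with μ(Xᵢ = a ∧ Xⱼ = b) > 0 for all a, b ∈ {0,1}. Let Mᵢ be the OSDPRR release indicator with parameter εᵢ > 0 for Xᵢ and Mⱼ the OSDPRR release indicator with parameter εⱼ > 0 for Xⱼ. Assume Mᵢ is conditionally independent of Xⱼ given Xᵢ, and Mⱼ is conditionally independent of Mᵢ given Xⱼ. Set δ₁ = P(Xᵢ = 0 | Xⱼ = 0), δ₂ = P(Xᵢ = 0 | Xⱼ = 1), and f₂ = (1 − δ₁)/(1 − δ₂). Then P(Xⱼ = 0 | Mᵢ = 1 ∧ Mⱼ = 0) / P(Xⱼ = 1 | Mᵢ = 1 ∧ Mⱼ = 0) = f₂ · e^{εⱼ} · μ(Xⱼ = 0) / μ(Xⱼ = 1). -/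

import Mathlib

/-!
Intersecting with `Mᵢ = 1 ∧ Mⱼ = 0` reweights the two values of `Xⱼ` separately. Given `Xⱼ`,
`Mⱼ = 0` is certain when the record is sensitive and has probability `e^{-εⱼ}` otherwise, and by
the second conditional independence this factor splits off from `Mᵢ = 1`. The event `Mᵢ = 1`
forces `Xᵢ = 1` up to a null set and, by the first conditional independence, then has the same
probability `1 - e^{-εᵢ}` whatever `Xⱼ` is. Hence the posterior odds are
`e^{εⱼ} μ(Xᵢ = 1, Xⱼ = 0) / μ(Xᵢ = 1, Xⱼ = 1)`, and `1 - δ₁`, `1 - δ₂` are exactly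
`μ(Xᵢ = 1 | Xⱼ = 0)`, `μ(Xᵢ = 1 | Xⱼ = 1)`.
-/

open MeasureTheory Real

/-- Conditional probability `P(A | B) = μ(A ∩ B) / μ(B)`, as a real number. -/
noncomputable def condProb {Ω : Type*} [MeasurableSpace Ω] (μ : Measure Ω) (A B : Set Ω) : ℝ :=
  (μ (A ∩ B)).toReal / (μ B).toReal

section CondProb

variable {Ω : Type*} [MeasurableSpace Ω] {μ : Measure Ω}

theorem condProb_div_condProb [IsFiniteMeasure μ] (A A' B : Set Ω) :
    condProb μ A B / condProb μ A' B = μ.real (A ∩ B) / μ.real (A' ∩ B) := by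
  by_cases hB : μ.real B = 0
  · simp [condProb, ← measureReal_def, hB, measureReal_mono_null Set.inter_subset_right hB]
  · exact div_div_div_cancel_right₀ hB _ _

theorem one_sub_condProb [IsFiniteMeasure μ] {A B : Set Ω} (hA : MeasurableSet A)
    (hB : μ.real B ≠ 0) : 1 - condProb μ A B = condProb μ Aᶜ B := by
  have hsplit : μ.real (B ∩ A) + μ.real (B \ A) = μ.real B := measureReal_inter_add_sdiff hA
  rw [Set.inter_comm, Set.sdiff_eq_compl_inter] at hsplit
  simp only [condProb, ← measureReal_def]
  rw [eq_div_iff hB, sub_mul, div_mul_cancel₀ _ hB]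
  linarith

theorem measureReal_eq_of_mul_eq [IsFiniteMeasure μ] {A B C D : Set Ω}
    (h : μ A * μ C = μ B * μ D) (hC : μ C ≠ 0) :
    μ.real A = μ.real B * μ.real D / μ.real C := by
  rw [eq_div_iff ((measureReal_ne_zero_iff).2 hC)]
  simpa only [measureReal_def, ENNReal.toReal_mul] using congrArg ENNReal.toReal h

theorem one_sub_condProb_eq_false [IsFiniteMeasure μ] {X : Ω → Bool} (hX : Measurable X)
    {B : Set Ω} (hB : μ.real B ≠ 0) :
    1 - condProb μ {ω | X ω = false} B = condProb μ {ω | X ω = true} B := by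
  rw [one_sub_condProb (A := {ω | X ω = false}) (hX (measurableSet_singleton false)) hB]
  congr 1
  ext; simp

end CondProb

/-- `X = true` means the record is non-sensitive, `M = true` that it is released. -/
def IsOSDPRR {Ω : Type*} [MeasurableSpace Ω] (μ : Measure Ω) (M X : Ω → Bool) (ε : ℝ) : Prop :=
  μ {ω | M ω = true ∧ X ω = false} = 0 ∧
    μ.real {ω | M ω = true ∧ X ω = true} = (1 - exp (-ε)) * μ.real {ω | X ω = true}

namespace IsOSDPRR

variable {Ω : Type*} [MeasurableSpace Ω] {μ : Measure Ω} {M X : Ω → Bool} {ε : ℝ}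

theorem measure_released_and (h : IsOSDPRR μ M X ε) (P : Ω → Prop) :
    μ {ω | M ω = true ∧ P ω} = μ {ω | M ω = true ∧ X ω = true ∧ P ω} := by
  rw [← measure_sdiff_null (s := {ω | M ω = true ∧ P ω}) h.1]
  congr 1; ext ω; cases hX : X ω <;> cases hM : M ω <;> simp [hX, hM]

theorem measure_suppressed_sensitive (h : IsOSDPRR μ M X ε) :
    μ {ω | M ω = false ∧ X ω = false} = μ {ω | X ω = false} := by
  rw [← measure_sdiff_null (s := {ω | X ω = false}) h.1]
  congr 1; ext ω; cases hM : M ω <;> simp [hM]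

theorem measureReal_suppressed_nonsensitive [IsFiniteMeasure μ] (h : IsOSDPRR μ M X ε)
    (hM : Measurable M) :
    μ.real {ω | M ω = false ∧ X ω = true} = exp (-ε) * μ.real {ω | X ω = true} := by
  have hsplit := measureReal_inter_add_sdiff (μ := μ) (s := {ω | X ω = true})
    (hM (measurableSet_singleton true))
  have hreleased : {ω | X ω = true} ∩ M ⁻¹' {true} = {ω | M ω = true ∧ X ω = true} := by
    ext ω; simp [and_comm]
  have hsuppressed : {ω | X ω = true} \ M ⁻¹' {true} = {ω | M ω = false ∧ X ω = true} := by
    ext ω; simp [and_comm]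
  rw [hreleased, hsuppressed, h.2] at hsplit
  linarith

theorem measureReal_released_and [IsFiniteMeasure μ] (h : IsOSDPRR μ M X ε) {P : Ω → Prop}
    (hCI : μ {ω | M ω = true ∧ X ω = true ∧ P ω} * μ {ω | X ω = true}
      = μ {ω | M ω = true ∧ X ω = true} * μ {ω | X ω = true ∧ P ω})
    (hX : μ {ω | X ω = true} ≠ 0) :
    μ.real {ω | M ω = true ∧ P ω} = (1 - exp (-ε)) * μ.real {ω | X ω = true ∧ P ω} := by
  rw [measureReal_def, h.measure_released_and, ← measureReal_def, measureReal_eq_of_mul_eq hCI hX,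
    h.2]
  field_simp [(measureReal_ne_zero_iff).2 hX]

theorem measureReal_suppressed_and_sensitive [IsFiniteMeasure μ] (h : IsOSDPRR μ M X ε)
    {Q : Ω → Prop}
    (hCI : μ {ω | M ω = false ∧ Q ω ∧ X ω = false} * μ {ω | X ω = false}
      = μ {ω | M ω = false ∧ X ω = false} * μ {ω | Q ω ∧ X ω = false})
    (hX : μ {ω | X ω = false} ≠ 0) :
    μ.real {ω | M ω = false ∧ Q ω ∧ X ω = false} = μ.real {ω | Q ω ∧ X ω = false} := by
  rw [measureReal_eq_of_mul_eq hCI hX, measureReal_def (s := {ω | M ω = false ∧ X ω = false}),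
    h.measure_suppressed_sensitive, ← measureReal_def]
  field_simp [(measureReal_ne_zero_iff).2 hX]

theorem measureReal_suppressed_and_nonsensitive [IsFiniteMeasure μ] (h : IsOSDPRR μ M X ε)
    (hM : Measurable M) {Q : Ω → Prop}
    (hCI : μ {ω | M ω = false ∧ Q ω ∧ X ω = true} * μ {ω | X ω = true}
      = μ {ω | M ω = false ∧ X ω = true} * μ {ω | Q ω ∧ X ω = true})
    (hX : μ {ω | X ω = true} ≠ 0) :
    μ.real {ω | M ω = false ∧ Q ω ∧ X ω = true} = exp (-ε) * μ.real {ω | Q ω ∧ X ω = true} := by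
  rw [measureReal_eq_of_mul_eq hCI hX, h.measureReal_suppressed_nonsensitive hM]
  field_simp [(measureReal_ne_zero_iff).2 hX]

theorem measureReal_suppressed_and_odds [IsFiniteMeasure μ] (h : IsOSDPRR μ M X ε)
    (hM : Measurable M) {Q : Ω → Prop}
    (hCI : ∀ b, μ {ω | M ω = false ∧ Q ω ∧ X ω = b} * μ {ω | X ω = b}
      = μ {ω | M ω = false ∧ X ω = b} * μ {ω | Q ω ∧ X ω = b})
    (hX : ∀ b, μ {ω | X ω = b} ≠ 0) :
    μ.real {ω | M ω = false ∧ Q ω ∧ X ω = false} / μ.real {ω | M ω = false ∧ Q ω ∧ X ω = true}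
      = exp ε * (μ.real {ω | Q ω ∧ X ω = false} / μ.real {ω | Q ω ∧ X ω = true}) := by
  rw [h.measureReal_suppressed_and_sensitive (hCI false) (hX false),
    h.measureReal_suppressed_and_nonsensitive hM (hCI true) (hX true), exp_neg,
    mul_comm, ← div_div, div_inv_eq_mul, mul_comm]

end IsOSDPRR

theorem osdprr_colluding_released_suppressed_general {Ω : Type*} [MeasurableSpace Ω]
    (μ : Measure Ω) [IsProbabilityMeasure μ]
    (Xi Xj Mi Mj : Ω → Bool)
    (hXi : Measurable Xi)
    (hMj : Measurable Mj)
    (εi εj : ℝ) (hεi : 0 < εi)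
    (hpos : ∀ a b : Bool, 0 < μ {ω | Xi ω = a ∧ Xj ω = b})
    -- OSDPRR with parameter εᵢ for Xᵢ
    (hreli0 : μ {ω | Mi ω = true ∧ Xi ω = false} = 0)
    (hreli1 : (μ {ω | Mi ω = true ∧ Xi ω = true}).toReal
        = (1 - Real.exp (-εi)) * (μ {ω | Xi ω = true}).toReal)
    -- OSDPRR with parameter εⱼ for Xⱼ
    (hrelj0 : μ {ω | Mj ω = true ∧ Xj ω = false} = 0)
    (hrelj1 : (μ {ω | Mj ω = true ∧ Xj ω = true}).toReal
        = (1 - Real.exp (-εj)) * (μ {ω | Xj ω = true}).toReal)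
    -- conditional independence of Mᵢ and Xⱼ given Xᵢ
    (hCIi : ∀ m a b : Bool,
      μ {ω | Mi ω = m ∧ Xi ω = a ∧ Xj ω = b} * μ {ω | Xi ω = a}
        = μ {ω | Mi ω = m ∧ Xi ω = a} * μ {ω | Xi ω = a ∧ Xj ω = b})
    -- conditional independence of Mⱼ and Mᵢ given Xⱼ
    (hCIj : ∀ m m' b : Bool,
      μ {ω | Mj ω = m ∧ Mi ω = m' ∧ Xj ω = b} * μ {ω | Xj ω = b}
        = μ {ω | Mj ω = m ∧ Xj ω = b} * μ {ω | Mi ω = m' ∧ Xj ω = b}) :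
    condProb μ {ω | Xj ω = false} {ω | Mi ω = true ∧ Mj ω = false}
        / condProb μ {ω | Xj ω = true} {ω | Mi ω = true ∧ Mj ω = false}
      = ((1 - condProb μ {ω | Xi ω = false} {ω | Xj ω = false})
          / (1 - condProb μ {ω | Xi ω = false} {ω | Xj ω = true}))
        * Real.exp εj
        * ((μ {ω | Xj ω = false}).toReal / (μ {ω | Xj ω = true}).toReal) := by
  have hi : IsOSDPRR μ Mi Xi εi := ⟨hreli0, hreli1⟩
  have hj : IsOSDPRR μ Mj Xj εj := ⟨hrelj0, hrelj1⟩
  have hXi1 : μ {ω | Xi ω = true} ≠ 0 :=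
    ((hpos true true).trans_le (measure_mono fun _ h => h.1)).ne'
  have hXj : ∀ b, μ {ω | Xj ω = b} ≠ 0 := fun b =>
    ((hpos true b).trans_le (measure_mono fun _ h => h.2)).ne'
  have hrel : ∀ b, μ.real {ω | Mi ω = true ∧ Xj ω = b}
      = (1 - exp (-εi)) * μ.real {ω | Xi ω = true ∧ Xj ω = b} := fun b =>
    hi.measureReal_released_and (P := fun ω => Xj ω = b) (hCIi true true b) hXi1
  have hinter : ∀ b, {ω | Xj ω = b} ∩ {ω | Mi ω = true ∧ Mj ω = false}
      = {ω | Mj ω = false ∧ Mi ω = true ∧ Xj ω = b} := fun b => by ext; simp; tauto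
  have hXj' : ∀ b, μ.real {ω | Xj ω = b} ≠ 0 := fun b => (measureReal_ne_zero_iff).2 (hXj b)
  rw [condProb_div_condProb, hinter, hinter,
    hj.measureReal_suppressed_and_odds hMj (hCIj false true) hXj, hrel, hrel,
    one_sub_condProb_eq_false hXi (hXj' false), one_sub_condProb_eq_false hXi (hXj' true)]
  have hεi' : 1 - exp (-εi) ≠ 0 := (sub_pos.2 (exp_lt_one_iff.2 (neg_neg_of_pos hεi))).ne'
  have h11 : μ.real {ω | Xi ω = true ∧ Xj ω = true} ≠ 0 :=
    (measureReal_ne_zero_iff).2 (hpos true true).ne'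
  simp only [condProb, ← measureReal_def, ← Set.ofPred_and]
  field_simp [hXj' false, hXj' true]

/-- **Theorem 4, colluding applications, rᵢ released, rⱼ suppressed.** With
`δ₁ = P(Xᵢ = 0 | Xⱼ = 0)`, `δ₂ = P(Xᵢ = 0 | Xⱼ = 1)` and `f₂ = (1−δ₁)/(1−δ₂)`, the posterior
odds of `Xⱼ` given `Mᵢ = 1, Mⱼ = 0` equal `f₂·e^{εⱼ}` times the prior odds. -/
theorem osdprr_colluding_released_suppressed {Ω : Type*} [MeasurableSpace Ω]
    (μ : Measure Ω) [IsProbabilityMeasure μ]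
    (Xi Xj Mi Mj : Ω → Bool)
    (hXi : Measurable Xi) (hXj : Measurable Xj)
    (hMi : Measurable Mi) (hMj : Measurable Mj)
    (εi εj : ℝ) (hεi : 0 < εi) (hεj : 0 < εj)
    (hpos : ∀ a b : Bool, 0 < μ {ω | Xi ω = a ∧ Xj ω = b})
    -- OSDPRR with parameter εᵢ for Xᵢ
    (hreli0 : μ {ω | Mi ω = true ∧ Xi ω = false} = 0)
    (hreli1 : (μ {ω | Mi ω = true ∧ Xi ω = true}).toReal
        = (1 - Real.exp (-εi)) * (μ {ω | Xi ω = true}).toReal)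
    -- OSDPRR with parameter εⱼ for Xⱼ
    (hrelj0 : μ {ω | Mj ω = true ∧ Xj ω = false} = 0)
    (hrelj1 : (μ {ω | Mj ω = true ∧ Xj ω = true}).toReal
        = (1 - Real.exp (-εj)) * (μ {ω | Xj ω = true}).toReal)
    -- conditional independence of Mᵢ and Xⱼ given Xᵢ
    (hCIi : ∀ m a b : Bool,
      μ {ω | Mi ω = m ∧ Xi ω = a ∧ Xj ω = b} * μ {ω | Xi ω = a}
        = μ {ω | Mi ω = m ∧ Xi ω = a} * μ {ω | Xi ω = a ∧ Xj ω = b})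
    -- conditional independence of Mⱼ and Mᵢ given Xⱼ
    (hCIj : ∀ m m' b : Bool,
      μ {ω | Mj ω = m ∧ Mi ω = m' ∧ Xj ω = b} * μ {ω | Xj ω = b}
        = μ {ω | Mj ω = m ∧ Xj ω = b} * μ {ω | Mi ω = m' ∧ Xj ω = b}) :
    condProb μ {ω | Xj ω = false} {ω | Mi ω = true ∧ Mj ω = false}
        / condProb μ {ω | Xj ω = true} {ω | Mi ω = true ∧ Mj ω = false}
      = ((1 - condProb μ {ω | Xi ω = false} {ω | Xj ω = false})
          / (1 - condProb μ {ω | Xi ω = false} {ω | Xj ω = true}))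
        * Real.exp εj
        * ((μ {ω | Xj ω = false}).toReal / (μ {ω | Xj ω = true}).toReal) :=
  osdprr_colluding_released_suppressed_general μ Xi Xj Mi Mj hXi hMj εi εj hεi hpos hreli0 hreli1
    hrelj0 hrelj1 hCIi hCIj
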